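/- In the evolution algebra A over ℤ/4ℤ with basis (x_i)_{i≥1} and relations x_i·x_i = 2x_i + x_{i+1}, x_i·x_j = 0 for i ≠ j, every element a ∈ A satisfies: for every j ≥ 0, the principal power a^{3+2j} lies in A_{j+2} = span{ x_i : i ≥ j+2 }, i.e. the coefficient of x_i in a^{3+2j} is zero for all i ≤ j+1. -/
import Mathlib


/-!
The evolution algebra `A` over `R = ℤ/4ℤ` with basis `(x_i)_{i ≥ 1}` indexed by
`ℕ+` (underlying module `ℕ+ →₀ ZMod 4`, `x_i = Finsupp.single i 1`) and
relations `x_i · x_i = 2x_i + x_{i+1}`, `x_i · x_j = 0` for `i ≠ j`;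
concretely `(a · b) = ∑_i a(i) * b(i) • (2 • x_i + x_{i+1})`.
-/
noncomputable def evolMul {R : Type*} [CommRing R] {ι : Type*}
    (Csq : ι → ι →₀ R) (a b : ι →₀ R) : ι →₀ R :=
  a.sum fun i ai => (ai * b i) • Csq i

/-- The squares of the basis elements: `x_i · x_i = 2 • x_i + x_{i+1}`. -/
noncomputable def sqZ4 : ℕ+ → (ℕ+ →₀ ZMod 4) := fun i =>
  (2 : ZMod 4) • Finsupp.single i 1 + Finsupp.single (i + 1) 1

/-- Principal powers: `ppow mul a n = aⁿ` for `n ≥ 1`, defined by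
`a^1 = a` and `a^{n+1} = a^n · a`. -/
def ppow {A : Type*} (mul : A → A → A) (a : A) : ℕ → A
  | 0 => a
  | 1 => a
  | n + 2 => mul (ppow mul a (n + 1)) a

lemma mul_apply_one (a b : ℕ+ →₀ ZMod 4) :
    evolMul sqZ4 a b 1 = 2 * (a 1 * b 1) := by
  classical
  rw [evolMul, Finsupp.sum_apply, Finsupp.sum]
  have : ∀ i : ℕ+, i + 1 ≠ 1 := by intro i h; exact absurd (congrArg PNat.val h) (by simp)
  simp only [sqZ4, Finsupp.add_apply, Finsupp.smul_apply, Finsupp.single_apply, this,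
    if_neg, ite_false, smul_eq_mul]
  rw [Finset.sum_congr rfl (fun i _ => by
    rw [show (a i * b i * (2 * (if i = 1 then (1:ZMod 4) else 0) + 0) : ZMod 4)
      = if i = 1 then 2 * (a i * b i) else 0 by split <;> simp [mul_comm]])]
  rw [Finset.sum_ite_eq' a.support 1 (fun i => 2 * (a i * b i))]
  split <;> simp_all [Finsupp.notMem_support_iff.mp]

lemma mul_apply_succ (a b : ℕ+ →₀ ZMod 4) (k : ℕ+) :
    evolMul sqZ4 a b (k + 1) = 2 * (a (k + 1) * b (k + 1)) + a k * b k := by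
  classical
  rw [evolMul, Finsupp.sum_apply, Finsupp.sum]
  simp only [sqZ4, Finsupp.add_apply, Finsupp.smul_apply, Finsupp.single_apply, smul_eq_mul,
    add_left_inj]
  have key : ∀ i : ℕ+, a i * b i * (2 * (if i = k + 1 then (1:ZMod 4) else 0) +
        (if i = k then (1:ZMod 4) else 0))
      = (if i = k + 1 then 2 * (a i * b i) else 0) + (if i = k then a i * b i else 0) := by
    intro i
    have hkk : (k:ℕ+) ≠ k + 1 := fun h => by simpa using congrArg PNat.val h
    by_cases h2 : i = k
    · subst h2; simp [hkk, mul_comm]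
    · by_cases h1 : i = k + 1
      · subst h1; simp [h2, mul_comm]
      · simp [h1, h2]
  rw [Finset.sum_congr rfl fun i _ => key i]
  rw [Finset.sum_add_distrib,
    Finset.sum_ite_eq' a.support (k+1) (fun i => 2 * (a i * b i)),
    Finset.sum_ite_eq' a.support k (fun i => a i * b i)]
  by_cases h1 : k + 1 ∈ a.support <;> by_cases h2 : k ∈ a.support <;>
    simp [h1, h2, Finsupp.notMem_support_iff.mp, Finsupp.notMem_support_iff.1]

lemma step_lemma (p a : ℕ+ →₀ ZMod 4) (t : ℕ) (hp : ∀ i : ℕ+, (i:ℕ) ≤ t → p i = 0) :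
    ∀ i : ℕ+, (i:ℕ) ≤ t + 1 → evolMul sqZ4 (evolMul sqZ4 p a) a i = 0 := by
  have h22 : ∀ x y : ZMod 4, 2 * (2 * x * y) = 0 := by decide
  intro i hi
  by_cases h1 : i = 1
  · subst h1
    rw [mul_apply_one, mul_apply_one]
    exact h22 _ _
  · obtain ⟨k, rfl⟩ := PNat.exists_eq_succ_of_ne_one h1
    have hcoe : ((k + 1 : ℕ+) : ℕ) = (k : ℕ) + 1 := rfl
    have hk : (k : ℕ) ≤ t := by rw [hcoe] at hi; omega
    have hk0 : p k = 0 := hp k hk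
    have hqk : evolMul sqZ4 p a k = 0 := by
      by_cases hk1 : k = 1
      · subst hk1
        rw [mul_apply_one, hp 1 hk]
        simp
      · obtain ⟨m, rfl⟩ := PNat.exists_eq_succ_of_ne_one hk1
        have hm : (m : ℕ) ≤ t := by
          have : ((m + 1 : ℕ+) : ℕ) = (m : ℕ) + 1 := rfl
          omega
        rw [mul_apply_succ, hp (m + 1) hk, hp m hm]
        simp
    rw [mul_apply_succ, mul_apply_succ, hqk, hk0]
    simp only [zero_mul, mul_zero, add_zero]
    exact h22 _ _

/-- In the evolution algebra over `ℤ/4ℤ` with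
`x_i·x_i = 2x_i + x_{i+1}`, every element `a` satisfies: for every `j ≥ 0`, the
principal power `a^{3+2j}` lies in `A_{j+2} = span{ x_i : i ≥ j + 2 }`, i.e.
the coefficient of `x_i` in `a^{3+2j}` vanishes for all `i ≤ j + 1`. -/
theorem example_Z4_power_filtration :
    ∀ (a : ℕ+ →₀ ZMod 4) (j : ℕ) (i : ℕ+), (i : ℕ) ≤ j + 1 →
      (ppow (evolMul sqZ4) a (3 + 2 * j)) i = 0 := by
  intro a j
  induction j with
  | zero =>
    intro i hi
    have h3 : ppow (evolMul sqZ4) a (3 + 2 * 0) = evolMul sqZ4 (evolMul sqZ4 a a) a := rfl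
    rw [h3]
    exact step_lemma a a 0 (fun i' hi' => absurd (Nat.lt_of_lt_of_le i'.2 hi') (lt_irrefl 0)) i
      (by simpa using hi)
  | succ j ih =>
    intro i hi
    have e : 3 + 2 * (j + 1) = (3 + 2 * j) + 2 := by ring
    rw [e]
    have e2 : ppow (evolMul sqZ4) a ((3 + 2 * j) + 2)
        = evolMul sqZ4 (evolMul sqZ4 (ppow (evolMul sqZ4) a (3 + 2 * j)) a) a := by
      have u1 : ppow (evolMul sqZ4) a ((3 + 2 * j) + 2)
          = evolMul sqZ4 (ppow (evolMul sqZ4) a ((3 + 2 * j) + 1)) a := rfl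
      have u2 : (3 + 2 * j) + 1 = (2 + 2 * j) + 2 := by omega
      have u3 : ppow (evolMul sqZ4) a ((2 + 2 * j) + 2)
          = evolMul sqZ4 (ppow (evolMul sqZ4) a ((2 + 2 * j) + 1)) a := rfl
      have u4 : (2 + 2 * j) + 1 = 3 + 2 * j := by omega
      rw [u1, u2, u3, u4]
    rw [e2]
    exact step_lemma _ a (j + 1) (fun i hi => ih i hi) i hi
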